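/- arXiv:2202.08711 — 3 statements merged into one kernel-verified Lean document; each statement's English description precedes it below -/
import Mathlib

section
/- Let C ⊂ ℝⁿ be a nonempty compact convex set and f : ℝⁿ → ℝ be convex and differentiable with L-Lipschitz gradient. If x₀ ∈ C and for each t, x_{t+1} = (1-γ_t) x_t + γ_t v_t where v_t ∈ argmin_{v ∈ C} ⟨v, ∇f(x_t)⟩ and γ_t = 2/(t+2), then for all t ≥ 1, f(x_t) - min_C f ≤ 2 L (diam C)² / (t+2). -/
/-!
Write `h t = f (x t) - min_C f` and `D = diam C`. Convexity bounds the Frank–Wolfe gap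
`⟪∇f(x t), v t - x t⟫` by `-h t`, and the descent lemma for the `L`-Lipschitz gradient bounds the
second-order remainder of the step by `γ² L D² / 2`. Hence
`h (t + 1) ≤ (1 - γ t) h t + γ t ² L D² / 2`, and for `γ t = 2 / (t + 2)` induction gives
`h t ≤ 2 L D² / (t + 2)`.
-/

open scoped RealInnerProductSpace
open Set AffineMap

section Smooth

variable {E : Type*} [NormedAddCommGroup E] [InnerProductSpace ℝ E] [CompleteSpace E]
  {f : E → ℝ} {g : E → E}

theorem HasGradientAt.hasDerivAt_comp_lineMap {g' x y : E} {t : ℝ}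
    (hf : HasGradientAt f g' (lineMap x y t)) :
    HasDerivAt (fun s => f (lineMap x y s)) ⟪g', y - x⟫ t := by
  simpa [InnerProductSpace.toDual_apply_apply, Function.comp_def] using
    hf.hasFDerivAt.comp_hasDerivAt t hasDerivAt_lineMap

theorem ConvexOn.add_inner_le_of_hasGradientAt {s : Set E} (hf : ConvexOn ℝ s f) {g' x y : E}
    (hx : x ∈ s) (hy : y ∈ s) (hg : HasGradientAt f g' x) :
    f x + ⟪g', y - x⟫ ≤ f y := by
  have hline : ConvexOn ℝ (lineMap x y ⁻¹' s) (fun t : ℝ => f (lineMap x y t)) :=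
    hf.comp_affineMap (lineMap x y)
  have hderiv : HasDerivAt (fun t : ℝ => f (lineMap x y t)) ⟪g', y - x⟫ 0 :=
    HasGradientAt.hasDerivAt_comp_lineMap (by simpa using hg)
  have := hline.le_slope_of_hasDerivAt (x := 0) (y := 1) (by simpa using hx) (by simpa using hy)
    one_pos hderiv
  simp only [slope_def_field, lineMap_apply_one, lineMap_apply_zero, sub_zero, div_one] at this
  linarith

theorem le_add_inner_add_sq_of_lipschitz_gradient {L : ℝ}
    (hgrad : ∀ z, HasGradientAt f (g z) z) (hlip : ∀ a b, ‖g a - g b‖ ≤ L * ‖a - b‖) (x y : E) :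
    f y ≤ f x + ⟪g x, y - x⟫ + L / 2 * ‖y - x‖ ^ 2 := by
  set χ : ℝ → ℝ := fun s => f (lineMap x y s) - s * ⟪g x, y - x⟫ - L / 2 * s ^ 2 * ‖y - x‖ ^ 2
  have hχ : ∀ s, HasDerivAt χ
      (⟪g (lineMap x y s), y - x⟫ - ⟪g x, y - x⟫ - L * s * ‖y - x‖ ^ 2) s := fun s => by
    have hpow := ((hasDerivAt_pow 2 s).const_mul (L / 2)).mul_const (‖y - x‖ ^ 2)
    have hlin := (hasDerivAt_id s).mul_const ⟪g x, y - x⟫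
    exact ((HasGradientAt.hasDerivAt_comp_lineMap (x := x) (y := y) (hgrad _)).sub hlin).sub hpow
      |>.congr_deriv (by norm_num [← mul_assoc])
  have hχ_nonpos : ∀ s ∈ interior (Icc (0 : ℝ) 1),
      ⟪g (lineMap x y s), y - x⟫ - ⟪g x, y - x⟫ - L * s * ‖y - x‖ ^ 2 ≤ 0 := by
    intro s hs
    rw [interior_Icc] at hs
    have : ⟪g (lineMap x y s) - g x, y - x⟫ ≤ L * s * ‖y - x‖ ^ 2 :=
      calc ⟪g (lineMap x y s) - g x, y - x⟫ ≤ ‖g (lineMap x y s) - g x‖ * ‖y - x‖ :=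
            real_inner_le_norm _ _
        _ ≤ L * ‖lineMap x y s - x‖ * ‖y - x‖ := by gcongr; exact hlip _ _
        _ = L * s * ‖y - x‖ ^ 2 := by
            rw [lineMap_apply_module', add_sub_cancel_right, norm_smul, Real.norm_of_nonneg hs.1.le]
            ring
    rw [inner_sub_left] at this
    linarith
  have hanti : AntitoneOn χ (Icc 0 1) :=
    antitoneOn_of_hasDerivWithinAt_nonpos (convex_Icc 0 1)
      (HasDerivAt.continuousOn fun s _ => hχ s) (fun s _ => (hχ s).hasDerivWithinAt) hχ_nonpos
  have := hanti (left_mem_Icc.2 zero_le_one) (right_mem_Icc.2 zero_le_one) zero_le_one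
  simp only [χ, lineMap_apply_one, lineMap_apply_zero, one_mul, one_pow, mul_one, zero_mul,
    sub_zero, zero_pow two_ne_zero, mul_zero] at this
  linarith

theorem frankWolfe_step_sub_le {C : Set E} (hC : Bornology.IsBounded C)
    (hf : ConvexOn ℝ Set.univ f)
    (hgrad : ∀ z, HasGradientAt f (g z) z) {L : ℝ} (hL : 0 ≤ L)
    (hlip : ∀ a b, ‖g a - g b‖ ≤ L * ‖a - b‖) {x v z : E} (hx : x ∈ C) (hv : v ∈ C)
    (hvmin : ∀ w ∈ C, ⟪v, g x⟫ ≤ ⟪w, g x⟫) (hz : z ∈ C) {γ : ℝ} (hγ : 0 ≤ γ) :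
    f ((1 - γ) • x + γ • v) - f z ≤
      (1 - γ) * (f x - f z) + γ ^ 2 * (L * Metric.diam C ^ 2 / 2) := by
  have hgap : ⟪g x, v - x⟫ ≤ f z - f x := by
    have := hf.add_inner_le_of_hasGradientAt trivial trivial (hgrad x) (y := z)
    rw [inner_sub_right] at this ⊢
    linarith [hvmin z hz, real_inner_comm v (g x), real_inner_comm z (g x)]
  have hdiam : ‖v - x‖ ≤ Metric.diam C := by
    rw [← dist_eq_norm]
    exact Metric.dist_le_diam_of_mem hC hv hx
  have hstep : (1 - γ) • x + γ • v - x = γ • (v - x) := by module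
  have hdescent := le_add_inner_add_sq_of_lipschitz_gradient hgrad hlip x ((1 - γ) • x + γ • v)
  rw [hstep, real_inner_smul_right, norm_smul, Real.norm_of_nonneg hγ] at hdescent
  calc f ((1 - γ) • x + γ • v) - f z
      ≤ f x + γ * ⟪g x, v - x⟫ + L / 2 * (γ * ‖v - x‖) ^ 2 - f z := by linarith
    _ ≤ f x + γ * (f z - f x) + L / 2 * (γ * Metric.diam C) ^ 2 - f z := by gcongr
    _ = (1 - γ) * (f x - f z) + γ ^ 2 * (L * Metric.diam C ^ 2 / 2) := by ring

end Smooth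

theorem two_div_nat_add_two_le_one (t : ℕ) : 2 / ((t : ℝ) + 2) ≤ 1 := by
  rw [div_le_one (by positivity)]
  linarith [t.cast_nonneg (α := ℝ)]

theorem le_two_mul_div_of_openLoop_recursion {h : ℕ → ℝ} {A : ℝ} (hA : 0 ≤ A)
    (hrec : ∀ t : ℕ, h (t + 1) ≤ (1 - 2 / ((t : ℝ) + 2)) * h t + (2 / ((t : ℝ) + 2)) ^ 2 * (A / 2))
    (t : ℕ) (ht : 1 ≤ t) : h t ≤ 2 * A / ((t : ℝ) + 2) := by
  induction t, ht using Nat.le_induction with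
  | base => linarith [hrec 0]
  | succ t _ ih =>
    calc h (t + 1)
        ≤ (1 - 2 / ((t : ℝ) + 2)) * (2 * A / ((t : ℝ) + 2)) + (2 / ((t : ℝ) + 2)) ^ 2 * (A / 2) :=
          (hrec t).trans (by gcongr; exact sub_nonneg.2 (two_div_nat_add_two_le_one t))
      _ = 2 * A * ((t : ℝ) + 1) / ((t : ℝ) + 2) ^ 2 := by field_simp; ring
      _ ≤ 2 * A / (((t + 1 : ℕ) : ℝ) + 2) := by
          rw [div_le_div_iff₀ (by positivity) (by positivity)]
          push_cast
          nlinarith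

theorem frank_wolfe_open_loop_rate_general {n : ℕ}
    (C : Set (EuclideanSpace ℝ (Fin n)))
    (hCcomp : IsCompact C) (hCconv : Convex ℝ C)
    (f : EuclideanSpace ℝ (Fin n) → ℝ)
    (g : EuclideanSpace ℝ (Fin n) → EuclideanSpace ℝ (Fin n))
    (hfconv : ConvexOn ℝ Set.univ f)
    (hgrad : ∀ x, HasGradientAt f (g x) x)
    (L : ℝ) (hL : 0 < L)
    (hlip : ∀ x y, ‖g x - g y‖ ≤ L * ‖x - y‖)
    (x v : ℕ → EuclideanSpace ℝ (Fin n))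
    (hx0 : x 0 ∈ C)
    (hv : ∀ t, v t ∈ C ∧ ∀ w ∈ C, ⟪v t, g (x t)⟫ ≤ ⟪w, g (x t)⟫)
    (hstep : ∀ t : ℕ,
      x (t + 1) = (1 - 2 / ((t : ℝ) + 2)) • x t + (2 / ((t : ℝ) + 2)) • v t) :
    ∀ t : ℕ, 1 ≤ t →
      f (x t) - sInf (f '' C) ≤ 2 * L * (Metric.diam C) ^ 2 / ((t : ℝ) + 2) := by
  have hxC : ∀ t, x t ∈ C := by
    intro t
    induction t with
    | zero => exact hx0
    | succ t ih =>
      rw [hstep t]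
      exact hCconv ih (hv t).1 (by linarith [two_div_nat_add_two_le_one t]) (by positivity)
        (by ring)
  have hfcont : Continuous f :=
    continuous_iff_continuousAt.2 fun z => (hgrad z).differentiableAt.continuousAt
  obtain ⟨xs, hxsC, hxs⟩ := (hCcomp.image hfcont).sInf_mem (Set.Nonempty.image f ⟨x 0, hx0⟩)
  simp only [← hxs, mul_assoc 2 L]
  refine le_two_mul_div_of_openLoop_recursion (h := fun t => f (x t) - f xs) (by positivity)
    fun t => ?_
  rw [hstep t]
  exact frankWolfe_step_sub_le hCcomp.isBounded hfconv hgrad hL.le hlip (hxC t) (hv t).1 (hv t).2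
    hxsC (by positivity)

theorem frank_wolfe_open_loop_rate {n : ℕ}
    (C : Set (EuclideanSpace ℝ (Fin n))) (hCne : C.Nonempty)
    (hCcomp : IsCompact C) (hCconv : Convex ℝ C)
    (f : EuclideanSpace ℝ (Fin n) → ℝ)
    (g : EuclideanSpace ℝ (Fin n) → EuclideanSpace ℝ (Fin n))
    (hfconv : ConvexOn ℝ Set.univ f)
    (hgrad : ∀ x, HasGradientAt f (g x) x)
    (L : ℝ) (hL : 0 < L)
    (hlip : ∀ x y, ‖g x - g y‖ ≤ L * ‖x - y‖)
    (x v : ℕ → EuclideanSpace ℝ (Fin n))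
    (hx0 : x 0 ∈ C)
    (hv : ∀ t, v t ∈ C ∧ ∀ w ∈ C, ⟪v t, g (x t)⟫ ≤ ⟪w, g (x t)⟫)
    (hstep : ∀ t : ℕ,
      x (t + 1) = (1 - 2 / ((t : ℝ) + 2)) • x t + (2 / ((t : ℝ) + 2)) • v t) :
    ∀ t : ℕ, 1 ≤ t →
      f (x t) - sInf (f '' C) ≤ 2 * L * (Metric.diam C) ^ 2 / ((t : ℝ) + 2) :=
  frank_wolfe_open_loop_rate_general C hCcomp hCconv f g hfconv hgrad L hL hlip x v hx0 hv hstep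
end

section
/- In ℝ², define B₀ = (-1/4, 3/4), C₀ = (1/4, 3/4), and recursively B_{k+1} = (-1/4, (3/5)·⟨C_k, e₂⟩), C_{k+1} = (1/4, (3/5)·⟨B_k, e₂⟩). Then for all k ∈ ℕ, the points C_k, B_{k+1}, and (-1, 0) are collinear, and the points B_k, C_{k+1}, and (1, 0) are collinear. -/
/-! Both sketches have equal heights, `(3/4)(3/5)^k`, at step `k`. The next vertex
`(∓1/4, (3/5) y)` is then the point `2/5` of the way from the current vertex `(±1/4, y)` to the
focus `(∓1, 0)`. -/

theorem collinear_lineMap {k V P : Type*} [Field k] [AddCommGroup V] [Module k V]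
    [AddTorsor V P] (p q : P) (t : k) :
    Collinear k {p, AffineMap.lineMap p q t, q} := by
  rw [Set.insert_comm]
  exact collinear_insert_of_mem_affineSpan_pair (AffineMap.lineMap_mem_affineSpan_pair t p q)

theorem collinear_sketch_step (a y : ℝ) :
    Collinear ℝ {(a, y), (-a, 3/5 * y), (-4 * a, 0)} := by
  have hstep : ((-a, 3/5 * y) : ℝ × ℝ) = AffineMap.lineMap (a, y) (-4 * a, 0) (2/5 : ℝ) := by
    ext <;> simp only [AffineMap.lineMap_apply_module, Prod.fst_add, Prod.snd_add,
      Prod.smul_fst, Prod.smul_snd, smul_eq_mul] <;> ring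
  rw [hstep]
  exact collinear_lineMap _ _ _

theorem sketch_alignment (B C : ℕ → ℝ × ℝ)
    (hB0 : B 0 = (-1/4, 3/4)) (hC0 : C 0 = (1/4, 3/4))
    (hB : ∀ k, B (k + 1) = (-1/4, (3/5) * (C k).2))
    (hC : ∀ k, C (k + 1) = (1/4, (3/5) * (B k).2)) :
    ∀ k : ℕ,
      Collinear ℝ {C k, B (k + 1), ((-1 : ℝ), (0 : ℝ))} ∧
      Collinear ℝ {B k, C (k + 1), ((1 : ℝ), (0 : ℝ))} := by
  have height_eq : ∀ k, (B k).2 = (C k).2 := by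
    intro k
    induction k with
    | zero => rw [hB0, hC0]
    | succ n ih => rw [hB n, hC n, ih]
  have hB_eq : ∀ k, B k = (-1/4, (B k).2) := by
    rintro (_ | n)
    · rw [hB0]
    · rw [hB n]
  have hC_eq : ∀ k, C k = (1/4, (C k).2) := by
    rintro (_ | n)
    · rw [hC0]
    · rw [hC n]
  intro k
  constructor
  · rw [hB k, hC_eq k]
    convert collinear_sketch_step (1/4) (C k).2 using 4 <;> norm_num
  · rw [hC k, hB_eq k]
    convert collinear_sketch_step (-1/4) (B k).2 using 4 <;> norm_num
end

section
/- In ℝ², let C = conv{(-2, 1/4), (-1, 0), (0, 1), (1, 0)} and let (γ_t) be the open-loop step size γ_t = 2/(t+2). Define B₀ = (0,1), B₁ = (-2, 1/4), V₁ = (1,0), B_{k+1} = (1-γ_k)B_k + γ_k V_k, and V_{k+1} = -V_k if |⟨B_{k+1},e₁⟩| > 1/4 and |⟨B_k,e₁⟩| ≤ 1/4, else V_{k+1} = V_k (with V₀ = (-2,1/4)). Then the sets {k : ⟨B_k,e₁⟩ ≤ -1/4} and {k : ⟨B_k,e₁⟩ ≥ 1/4} are both infinite, hence (B_k) does not converge.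 -/
/-!
Only first coordinates matter. While the target is `v = 1` the step reads
`x (k + 1) (k + 2) = k x k + 2`, so `(1 - x k) k (k + 1)` is conserved and `1 - x k → 0`: the orbit
must leave the band `|x| ≤ 1/4` upwards, which flips the target. For `k ≥ 3` one step cannot
jump over the whole band, so the flip really happens. The symmetry `(x, v) ↦ (-x, -v)` gives the
downward exits, and from `x 3 = 1/2`, `v 3 = -1` on the orbit alternates between the two sides forever.
-/

open Filter

theorem Nat.frequently_atTop_of_exists_gt {P : ℕ → Prop} {m₀ : ℕ} (h₀ : P m₀)
    (h : ∀ m, P m → ∃ m' > m, P m') : ∃ᶠ m in atTop, P m := by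
  have key : ∀ n, ∃ m ≥ n, P m := by
    intro n
    induction n with
    | zero => exact ⟨m₀, Nat.zero_le _, h₀⟩
    | succ n ih =>
      obtain ⟨m, hnm, hm⟩ := ih
      obtain ⟨m', hmm', hm'⟩ := h m hm
      exact ⟨m', by omega, hm'⟩
  exact frequently_atTop.2 key

theorem Nat.frequently_atTop_of_frequently_of_exists_gt {P Q : ℕ → Prop}
    (hP : ∃ᶠ m in atTop, P m) (h : ∀ m, P m → ∃ m' > m, Q m') : ∃ᶠ m in atTop, Q m := by
  refine frequently_atTop.2 fun a => ?_
  obtain ⟨b, hab, hb⟩ := frequently_atTop.1 hP a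
  obtain ⟨m', hbm', hm'⟩ := h b hb
  exact ⟨m', hab.trans hbm'.le, hm'⟩

/-- First coordinates of the iterates `x k = ⟨B k, e₁⟩` and of the targets `v k = ⟨V k, e₁⟩`. -/
def FlipDynamics (x v : ℕ → ℝ) : Prop :=
  ∀ k : ℕ, 1 ≤ k → x (k + 1) = (1 - 2 / ((k : ℝ) + 2)) * x k + 2 / ((k : ℝ) + 2) * v k ∧
    v (k + 1) = if 1/4 < |x (k + 1)| ∧ |x k| ≤ 1/4 then -v k else v k

namespace FlipDynamics

variable {x v : ℕ → ℝ} {k : ℕ}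

theorem neg (h : FlipDynamics x v) : FlipDynamics (-x) (-v) := by
  intro k hk
  obtain ⟨hx, hv⟩ := h k hk
  simp only [Pi.neg_apply, abs_neg, hx, hv]
  constructor
  · ring
  · split_ifs <;> rfl

theorem succ_mul (h : FlipDynamics x v) (hk : 1 ≤ k) :
    x (k + 1) * ((k : ℝ) + 2) = k * x k + 2 * v k := by
  rw [(h k hk).1]
  field_simp
  ring

theorem flip_or_stay (h : FlipDynamics x v) (hk : 3 ≤ k) (hv : v k = 1) (hx : x k ≤ 1/4) :
    (v (k + 1) = -1 ∧ 1/4 < x (k + 1)) ∨ (v (k + 1) = 1 ∧ x (k + 1) ≤ 1/4) := by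
  have hkR : (3 : ℝ) ≤ k := by exact_mod_cast hk
  have hstep := h.succ_mul (k := k) (by omega)
  rw [hv] at hstep
  have hmono : x k ≤ x (k + 1) := by nlinarith
  rw [(h k (by omega)).2, hv]
  by_cases hup : 1/4 < x (k + 1)
  · have hlow : -(1/4) ≤ x k := by nlinarith
    rw [if_pos ⟨hup.trans_le (le_abs_self _), abs_le.2 ⟨hlow, hx⟩⟩]
    exact Or.inl ⟨rfl, hup⟩
  · push Not at hup
    rw [if_neg fun hc => hc.1.not_ge (abs_le.2 ⟨by linarith [(abs_le.1 hc.2).1], hup⟩)]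
    exact Or.inr ⟨rfl, hup⟩

theorem one_sub_mul_succ_eq (h : FlipDynamics x v) (hk : 1 ≤ k) (hv : v k = 1) :
    (1 - x (k + 1)) * (((k + 1 : ℕ) : ℝ) * ((k + 1 : ℕ) + 1)) = (1 - x k) * (k * (k + 1)) := by
  have hstep := h.succ_mul hk
  rw [hv] at hstep
  push_cast
  linear_combination (-((k : ℝ) + 1)) * hstep

theorem eq_three_of_eq_one (h : FlipDynamics x v) (hx : x 1 = -2) (hv : v 1 = 1) :
    v 3 = -1 ∧ x 3 = 1/2 := by
  obtain ⟨hx2, hv2⟩ := h 1 le_rfl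
  obtain ⟨hx3, hv3⟩ := h 2 (by norm_num)
  norm_num [hx, hv] at hx2 hv2
  norm_num [hx2, hv2] at hx3
  norm_num [hx2, hx3, hv2, abs_of_pos] at hv3
  exact ⟨hv3, hx3⟩

theorem exists_flip_up (h : FlipDynamics x v) (hk : 3 ≤ k) (hv : v k = 1) (hx : x k ≤ 1/4) :
    ∃ m > k, v m = -1 ∧ 1/4 ≤ x m := by
  by_contra! hstay
  set c := (1 - x k) * (k * (k + 1) : ℝ)
  have hinv : ∀ m ≥ k, v m = 1 ∧ x m ≤ 1/4 ∧ (1 - x m) * (m * (m + 1)) = c := by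
    intro m hm
    induction m, hm using Nat.le_induction with
    | base => exact ⟨hv, hx, rfl⟩
    | succ m hm ih =>
      obtain ⟨hvm, hxm, hcm⟩ := ih
      rcases h.flip_or_stay (hk.trans hm) hvm hxm with ⟨hflip, hup⟩ | ⟨hkeep, hle⟩
      · exact absurd (hstay (m + 1) (by omega) hflip) hup.not_gt
      · exact ⟨hkeep, hle, (h.one_sub_mul_succ_eq (by omega) hvm).trans hcm⟩
  obtain ⟨N, hN⟩ := exists_nat_gt (4 / 3 * c)
  obtain ⟨-, hxM, hcM⟩ := hinv (max k N) (le_max_left _ _)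
  have hNM : (N : ℝ) ≤ (max k N : ℕ) := by exact_mod_cast le_max_right k N
  set M : ℝ := ((max k N : ℕ) : ℝ)
  have hcM' : 3 / 4 * (M * (M + 1)) ≤ c := by
    rw [← hcM]
    exact mul_le_mul_of_nonneg_right (by linarith) (by positivity)
  nlinarith [(N.cast_nonneg : (0 : ℝ) ≤ N)]

theorem exists_flip_down (h : FlipDynamics x v) (hk : 3 ≤ k) (hv : v k = -1) (hx : -1/4 ≤ x k) :
    ∃ m > k, v m = 1 ∧ x m ≤ -1/4 := by
  obtain ⟨m, hkm, hvm, hxm⟩ := h.neg.exists_flip_up hk (by simp [hv]) (by simp; linarith)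
  exact ⟨m, hkm, neg_eq_iff_eq_neg.1 hvm |>.trans (by norm_num), by simp at hxm; linarith⟩

theorem frequently_crossings (h : FlipDynamics x v) (hk : 3 ≤ k) (hv : v k = -1) (hx : 1/4 ≤ x k) :
    (∃ᶠ m in atTop, x m ≤ -1/4) ∧ ∃ᶠ m in atTop, 1/4 ≤ x m := by
  let Up m := 3 ≤ m ∧ v m = -1 ∧ 1/4 ≤ x m
  have down_of_up : ∀ m, Up m → ∃ m' > m, 3 ≤ m' ∧ v m' = 1 ∧ x m' ≤ -1/4 := by
    rintro m ⟨hm, hvm, hxm⟩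
    obtain ⟨m', hmm', hvm', hxm'⟩ := h.exists_flip_down hm hvm (by linarith)
    exact ⟨m', hmm', by omega, hvm', hxm'⟩
  have hUp : ∃ᶠ m in atTop, Up m := by
    refine Nat.frequently_atTop_of_exists_gt (m₀ := k) ⟨hk, hv, hx⟩ fun m hm => ?_
    obtain ⟨m', hmm', hm', hvm', hxm'⟩ := down_of_up m hm
    obtain ⟨m'', hm'm'', hvm'', hxm''⟩ := h.exists_flip_up hm' hvm' (by linarith)
    exact ⟨m'', by omega, by omega, hvm'', hxm''⟩
  refine ⟨Nat.frequently_atTop_of_frequently_of_exists_gt hUp fun m hm => ?_,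
    hUp.mono fun m hm => hm.2.2⟩
  obtain ⟨m', hmm', -, -, hxm'⟩ := down_of_up m hm
  exact ⟨m', hmm', hxm'⟩

end FlipDynamics

theorem open_loop_counterexample_crossings_general (B V : ℕ → ℝ × ℝ)
    (hB1 : B 1 = ((-2 : ℝ), (1/4 : ℝ)))
    (hV1 : V 1 = ((1 : ℝ), (0 : ℝ)))
    (hBrec : ∀ k : ℕ, 1 ≤ k →
      B (k + 1) = (1 - 2 / ((k : ℝ) + 2)) • B k + (2 / ((k : ℝ) + 2)) • V k)
    (hVrec : ∀ k : ℕ, 1 ≤ k →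
      V (k + 1) = if 1/4 < |(B (k + 1)).1| ∧ |(B k).1| ≤ 1/4 then -V k else V k) :
    {k : ℕ | (B k).1 ≤ -1/4}.Infinite ∧ {k : ℕ | 1/4 ≤ (B k).1}.Infinite ∧
      ¬ ∃ l : ℝ × ℝ, Filter.Tendsto B Filter.atTop (nhds l) := by
  have h : FlipDynamics (fun k => (B k).1) (fun k => (V k).1) := fun k hk =>
    ⟨by simp [hBrec k hk], by simp only [hVrec k hk]; split_ifs <;> rfl⟩
  obtain ⟨hv3, hx3⟩ := h.eq_three_of_eq_one (by simp [hB1]) (by simp [hV1])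
  obtain ⟨hleft, hright⟩ := h.frequently_crossings le_rfl hv3 (by rw [hx3]; norm_num)
  refine ⟨Nat.frequently_atTop_iff_infinite.1 hleft, Nat.frequently_atTop_iff_infinite.1 hright, ?_⟩
  rintro ⟨l, hl⟩
  have hl₁ := (continuous_fst.tendsto l).comp hl
  have hle : l.1 ≤ -1/4 := isClosed_Iic.mem_of_frequently_of_tendsto hleft hl₁
  have hge : 1/4 ≤ l.1 := isClosed_Ici.mem_of_frequently_of_tendsto hright hl₁
  linarith

theorem open_loop_counterexample_crossings (B V : ℕ → ℝ × ℝ)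
    (hB0 : B 0 = ((0 : ℝ), (1 : ℝ)))
    (hB1 : B 1 = ((-2 : ℝ), (1/4 : ℝ)))
    (hV0 : V 0 = ((-2 : ℝ), (1/4 : ℝ)))
    (hV1 : V 1 = ((1 : ℝ), (0 : ℝ)))
    (hBrec : ∀ k : ℕ, 1 ≤ k →
      B (k + 1) = (1 - 2 / ((k : ℝ) + 2)) • B k + (2 / ((k : ℝ) + 2)) • V k)
    (hVrec : ∀ k : ℕ, 1 ≤ k →
      V (k + 1) = if 1/4 < |(B (k + 1)).1| ∧ |(B k).1| ≤ 1/4 then -V k else V k) :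
    {k : ℕ | (B k).1 ≤ -1/4}.Infinite ∧ {k : ℕ | 1/4 ≤ (B k).1}.Infinite ∧
      ¬ ∃ l : ℝ × ℝ, Filter.Tendsto B Filter.atTop (nhds l) :=
  open_loop_counterexample_crossings_general B V hB1 hV1 hBrec hVrec
end
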